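/- arXiv:1709.02300 — 5 statements merged into one kernel-verified Lean document; each statement's English description precedes it below -/
import Mathlib

section
/- The sequence (θ_k) defined by θ_0 = 1 and θ_{k+1} = (√(θ_k⁴ + 4θ_k²) − θ_k²)/2 satisfies 1/(k+1) ≤ θ_k ≤ 2/(k+2) for all k ≥ 0. -/
/-! θ_{k+1} is the nonnegative root u of u² + θ_k² u = θ_k². Since u ↦ u² + c u is increasing
on [0, ∞) for c ≥ 0, a candidate bound s for θ_{k+1} is checked by comparing s² + θ_k² s with θ_k²;
with the bounds on θ_k from the induction hypothesis this reduces to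
(k+1)(k+2) ≥ (k+1)² for the lower bound and (k+1)(k+3) ≤ (k+2)² for the upper one. -/

lemma sqrt_sq_add_four_mul_sub_div_two {c : ℝ} (hc : 0 ≤ c) :
    0 ≤ (√(c ^ 2 + 4 * c) - c) / 2 ∧
      ((√(c ^ 2 + 4 * c) - c) / 2) ^ 2 + c * ((√(c ^ 2 + 4 * c) - c) / 2) = c := by
  have hsq : √(c ^ 2 + 4 * c) ^ 2 = c ^ 2 + 4 * c := Real.sq_sqrt (by positivity)
  have hge : c ≤ √(c ^ 2 + 4 * c) := Real.le_sqrt_of_sq_le (by linarith)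
  exact ⟨by linarith, by linear_combination hsq / 4⟩

lemma le_of_sq_add_mul_le {a b c : ℝ} (hb : 0 ≤ b) (hc : 0 ≤ c)
    (h : a ^ 2 + c * a ≤ b ^ 2 + c * b) : a ≤ b := by
  by_contra! hba
  nlinarith [mul_le_mul_of_nonneg_left hba.le hc]

lemma one_div_add_two_le_of_sq_add_mul_eq {x t u : ℝ} (hx : 0 ≤ x) (ht : 1 / (x + 1) ≤ t)
    (hu : 0 ≤ u) (h : u ^ 2 + t ^ 2 * u = t ^ 2) : 1 / (x + 2) ≤ u := by
  refine le_of_sq_add_mul_le hu (sq_nonneg t) ?_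
  rw [h, ← sub_nonneg]
  rw [div_le_iff₀ (by positivity)] at ht
  have ht_sq : 1 ≤ t ^ 2 * (x + 1) ^ 2 := by
    rw [← mul_pow]; nlinarith
  have hdiff : t ^ 2 - ((1 / (x + 2)) ^ 2 + t ^ 2 * (1 / (x + 2)))
      = (t ^ 2 * (x + 2) * (x + 1) - 1) / (x + 2) ^ 2 := by
    field_simp; ring
  rw [hdiff]
  exact div_nonneg (by nlinarith [sq_nonneg t]) (by positivity)

lemma le_two_div_add_three_of_sq_add_mul_eq {x t u : ℝ} (hx : 0 ≤ x) (ht₀ : 0 ≤ t)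
    (ht : t ≤ 2 / (x + 2)) (h : u ^ 2 + t ^ 2 * u = t ^ 2) : u ≤ 2 / (x + 3) := by
  refine le_of_sq_add_mul_le (by positivity) (sq_nonneg t) ?_
  rw [h, ← sub_nonneg]
  rw [le_div_iff₀ (by positivity)] at ht
  have ht_sq : t ^ 2 * (x + 2) ^ 2 ≤ 4 := by
    rw [← mul_pow]; nlinarith [mul_nonneg ht₀ (by positivity : (0 : ℝ) ≤ x + 2)]
  have hdiff : (2 / (x + 3)) ^ 2 + t ^ 2 * (2 / (x + 3)) - t ^ 2
      = (4 - t ^ 2 * (x + 3) * (x + 1)) / (x + 3) ^ 2 := by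
    field_simp; ring
  rw [hdiff]
  exact div_nonneg (by nlinarith [sq_nonneg t]) (by positivity)

theorem stmt_1 (θ : ℕ → ℝ) (h0 : θ 0 = 1)
    (hrec : ∀ k, θ (k + 1) = (Real.sqrt ((θ k) ^ 4 + 4 * (θ k) ^ 2) - (θ k) ^ 2) / 2) :
    ∀ k : ℕ, 1 / (k + 1 : ℝ) ≤ θ k ∧ θ k ≤ 2 / (k + 2 : ℝ) := by
  intro k
  induction k with
  | zero => norm_num [h0]
  | succ k ih =>
    obtain ⟨hlo, hhi⟩ := ih
    have hθ : 0 ≤ θ k := (one_div_nonneg.2 (by positivity)).trans hlo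
    obtain ⟨hnext, hquad⟩ := sqrt_sq_add_four_mul_sub_div_two (sq_nonneg (θ k))
    rw [← pow_mul, ← hrec] at hnext hquad
    have e1 : ((k + 1 : ℕ) : ℝ) + 1 = k + 2 := by push_cast; ring
    have e2 : ((k + 1 : ℕ) : ℝ) + 2 = k + 3 := by push_cast; ring
    rw [e1, e2]
    exact ⟨one_div_add_two_le_of_sq_add_mul_eq k.cast_nonneg hlo hnext hquad,
      le_two_div_add_three_of_sq_add_mul_eq k.cast_nonneg hθ hhi hquad⟩
end

section
/- Under the smoothness assumption f(x) ≤ f(y) + ⟨∇f(y), x−y⟩ + (1/2)‖x−y‖²_L and the quadratic growth condition F(x) ≥ F⋆ + (μ/2)·dist_L(x, X⋆)² on [F ≤ F(x₀)], the proximal gradient mapping T satisfies the error bound dist_L(T(x), X⋆) ≤ (4/μ)·‖x − T(x)‖_L for every x with F(x) ≤ F(x₀). -/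
/-!
Write `p = T x` and `s = ‖x - p‖_L`. The optimality condition of the proximal step makes
`∇f p - ∇f x + L (x - p)` a subgradient of `F` at `p`, so for every minimiser `x⋆`
`F p - F⋆ ≤ ⟪∇f p - ∇f x, p - x⋆⟫ + ⟪x - p, p - x⋆⟫_L ≤ 2 s ‖p - x⋆‖_L`,
the gradient term being controlled by cocoercivity: `‖∇f p - ∇f x‖_{L⁻¹} ≤ s`.
Since `F p ≤ F x ≤ F x₀`, quadratic growth applies at `p`; taking the infimum over `x⋆`
gives `μ / 2 * d ^ 2 ≤ 2 * s * d` for `d = dist_L(p, X⋆)`, hence `d ≤ 4 s / μ`.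
-/

open scoped RealInnerProductSpace

/-- Distance to a set in the weighted Euclidean norm `‖u‖_L = √(∑ i, L i * u i ^ 2)`. -/
noncomputable def distL {n : ℕ} (L : Fin n → ℝ) (x : EuclideanSpace ℝ (Fin n))
    (S : Set (EuclideanSpace ℝ (Fin n))) : ℝ :=
  ⨅ y : S, Real.sqrt (∑ i, L i * (x i - (y : EuclideanSpace ℝ (Fin n)) i) ^ 2)

open Filter Topology Set

theorem ConvexOn.add_inner_le_of_hasGradientAt {E : Type*} [NormedAddCommGroup E]
    [InnerProductSpace ℝ E] [CompleteSpace E] {f : E → ℝ} {f' a : E}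
    (hf : ConvexOn ℝ univ f) (hfa : HasGradientAt f f' a) (b : E) :
    f a + ⟪f', b - a⟫ ≤ f b := by
  set ℓ : ℝ → E := ⇑(AffineMap.lineMap (k := ℝ) a b)
  have hline : HasDerivAt (f ∘ ℓ) ⟪f', b - a⟫ 0 := by
    have hfa' : HasFDerivAt f (InnerProductSpace.toDual ℝ E f') (ℓ 0) := by
      simpa [ℓ] using hasGradientAt_iff_hasFDerivAt.mp hfa
    simpa using hfa'.comp_hasDerivAt 0 AffineMap.hasDerivAt_lineMap
  have hconv : ConvexOn ℝ univ (f ∘ ℓ) := by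
    simpa using hf.comp_affineMap (AffineMap.lineMap a b)
  have := hconv.le_slope_of_hasDerivAt (mem_univ 0) (mem_univ 1) one_pos hline
  simp only [slope_def_field, Function.comp_apply, AffineMap.lineMap_apply_one,
    AffineMap.lineMap_apply_zero, sub_zero, div_one, ℓ] at this
  linarith

theorem nonneg_of_forall_nonneg_mul_add_sq {a b : ℝ}
    (h : ∀ t : ℝ, 0 < t → t ≤ 1 → 0 ≤ t * a + t ^ 2 * b) : 0 ≤ a := by
  have hcont : Continuous fun t : ℝ => a + t * b := by fun_prop
  have hlim : Tendsto (fun t : ℝ => a + t * b) (𝓝[>] 0) (𝓝 a) := by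
    simpa using (hcont.tendsto 0).mono_left nhdsWithin_le_nhds
  refine ge_of_tendsto hlim ?_
  filter_upwards [Ioc_mem_nhdsGT (zero_lt_one' ℝ)] with t ⟨ht0, ht1⟩
  have := h t ht0 ht1
  nlinarith

section Weighted

variable {ι : Type*} [Fintype ι] {L : ι → ℝ}

theorem sum_weight_mul_le_sqrt_mul_sqrt (hL : ∀ i, 0 ≤ L i) (u v : ι → ℝ) :
    ∑ i, L i * (u i * v i) ≤ √(∑ i, L i * u i ^ 2) * √(∑ i, L i * v i ^ 2) := by
  have hnonneg : ∀ w : ι → ℝ, ∀ i ∈ Finset.univ, 0 ≤ L i * w i ^ 2 :=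
    fun w i _ => mul_nonneg (hL i) (sq_nonneg _)
  rw [← Real.sqrt_mul (Finset.sum_nonneg (hnonneg u))]
  refine (le_abs_self _).trans (Real.abs_le_sqrt ?_)
  exact Finset.sum_sq_le_sum_mul_sum_of_sq_le_mul _ (hnonneg u) (hnonneg v)
    fun i _ => le_of_eq (by ring)

theorem sum_mul_le_sqrt_sum_sq_div_mul_sqrt (hL : ∀ i, 0 < L i) (w v : ι → ℝ) :
    ∑ i, w i * v i ≤ √(∑ i, w i ^ 2 / L i) * √(∑ i, L i * v i ^ 2) := by
  have h := sum_weight_mul_le_sqrt_mul_sqrt (fun i => (hL i).le) (fun i => w i / L i) v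
  have e1 : ∀ i, L i * (w i / L i * v i) = w i * v i := fun i => by field_simp [(hL i).ne']
  have e2 : ∀ i, L i * (w i / L i) ^ 2 = w i ^ 2 / L i := fun i => by
    field_simp [(hL i).ne']
  simpa only [e1, e2] using h

theorem sqrt_sum_sq_div_le_of_le_sum_mul (hL : ∀ i, 0 < L i) {w v : ι → ℝ}
    (h : ∑ i, w i ^ 2 / L i ≤ ∑ i, w i * v i) :
    √(∑ i, w i ^ 2 / L i) ≤ √(∑ i, L i * v i ^ 2) := by
  have hr : 0 ≤ ∑ i, w i ^ 2 / L i :=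
    Finset.sum_nonneg fun i _ => div_nonneg (sq_nonneg _) (hL i).le
  have := h.trans (sum_mul_le_sqrt_sum_sq_div_mul_sqrt hL w v)
  nlinarith [Real.mul_self_sqrt hr, Real.sqrt_nonneg (∑ i, w i ^ 2 / L i),
    Real.sqrt_nonneg (∑ i, L i * v i ^ 2)]

theorem EuclideanSpace.real_inner_eq_sum_mul (u v : EuclideanSpace ℝ ι) :
    ⟪u, v⟫ = ∑ i, u i * v i := by
  simp only [PiLp.inner_apply, RCLike.inner_apply, conj_trivial, mul_comm]

variable {f : EuclideanSpace ℝ ι → ℝ} {f' : EuclideanSpace ℝ ι → EuclideanSpace ℝ ι}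

theorem add_inner_add_half_sum_sq_div_le (hL : ∀ i, 0 < L i)
    (hf' : ∀ x, HasGradientAt f (f' x) x) (hf : ConvexOn ℝ univ f)
    (hsmooth : ∀ x y, f x ≤ f y + ⟪f' y, x - y⟫ + (1 / 2) * ∑ i, L i * (x i - y i) ^ 2)
    (a b : EuclideanSpace ℝ ι) :
    f a + ⟪f' a, b - a⟫ + (1 / 2) * ∑ i, (f' b i - f' a i) ^ 2 / L i ≤ f b := by
  -- `b - δ` minimises the quadratic upper model at `b` of `z ↦ f z - ⟪f' a, z⟫`.
  set δ : EuclideanSpace ℝ ι := WithLp.toLp 2 fun i => (f' b i - f' a i) / L i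
  have h1 := hf.add_inner_le_of_hasGradientAt (hf' a) (b - δ)
  have h2 := hsmooth (b - δ) b
  have e1 : ⟪f' a, b - δ - a⟫ = ⟪f' a, b - a⟫ - ⟪f' a, δ⟫ := by
    rw [sub_right_comm, inner_sub_right]
  have e2 : ⟪f' b, b - δ - b⟫ = -⟪f' b, δ⟫ := by rw [sub_sub_cancel_left, inner_neg_right]
  have e3 : ∑ i, L i * ((b - δ) i - b i) ^ 2 = ⟪f' b - f' a, δ⟫ := by
    simp only [EuclideanSpace.real_inner_eq_sum_mul]
    refine Finset.sum_congr rfl fun i _ => ?_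
    simp only [δ, PiLp.sub_apply]
    field_simp [(hL i).ne']
    ring
  have e4 : ⟪f' b - f' a, δ⟫ = ∑ i, (f' b i - f' a i) ^ 2 / L i := by
    simp only [EuclideanSpace.real_inner_eq_sum_mul]
    refine Finset.sum_congr rfl fun i _ => ?_
    simp only [δ, PiLp.sub_apply]
    field_simp [(hL i).ne']
  rw [inner_sub_left] at e3 e4
  linarith

theorem sum_sq_div_le_inner_sub (hL : ∀ i, 0 < L i)
    (hf' : ∀ x, HasGradientAt f (f' x) x) (hf : ConvexOn ℝ univ f)
    (hsmooth : ∀ x y, f x ≤ f y + ⟪f' y, x - y⟫ + (1 / 2) * ∑ i, L i * (x i - y i) ^ 2)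
    (a b : EuclideanSpace ℝ ι) :
    ∑ i, (f' b i - f' a i) ^ 2 / L i ≤ ⟪f' b - f' a, b - a⟫ := by
  have hab := add_inner_add_half_sum_sq_div_le hL hf' hf hsmooth a b
  have hba := add_inner_add_half_sum_sq_div_le hL hf' hf hsmooth b a
  have hsymm : ∑ i, (f' a i - f' b i) ^ 2 / L i = ∑ i, (f' b i - f' a i) ^ 2 / L i :=
    Finset.sum_congr rfl fun i _ => by ring
  rw [hsymm, ← neg_sub b a, inner_neg_right] at hba
  rw [inner_sub_left]
  linarith

theorem sqrt_sum_sq_div_le_sqrt_sum_sq (hL : ∀ i, 0 < L i)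
    (hf' : ∀ x, HasGradientAt f (f' x) x) (hf : ConvexOn ℝ univ f)
    (hsmooth : ∀ x y, f x ≤ f y + ⟪f' y, x - y⟫ + (1 / 2) * ∑ i, L i * (x i - y i) ^ 2)
    (a b : EuclideanSpace ℝ ι) :
    √(∑ i, (f' b i - f' a i) ^ 2 / L i) ≤ √(∑ i, L i * (b i - a i) ^ 2) := by
  refine sqrt_sum_sq_div_le_of_le_sum_mul hL ?_
  simpa only [EuclideanSpace.real_inner_eq_sum_mul, PiLp.sub_apply] using
    sum_sq_div_le_inner_sub hL hf' hf hsmooth a b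

def IsProxGradStep (L : ι → ℝ) (g : EuclideanSpace ℝ ι) (ψ : EuclideanSpace ℝ ι → ℝ)
    (x p : EuclideanSpace ℝ ι) : Prop :=
  IsMinOn (fun y => ⟪g, y - x⟫ + (1 / 2) * (∑ i, L i * (y i - x i) ^ 2) + ψ y) univ p

namespace IsProxGradStep

variable {ψ : EuclideanSpace ℝ ι → ℝ} {g x p : EuclideanSpace ℝ ι}

theorem add_le
    (hsmooth : ∀ x y, f x ≤ f y + ⟪f' y, x - y⟫ + (1 / 2) * ∑ i, L i * (x i - y i) ^ 2)
    (hp : IsProxGradStep L (f' x) ψ x p) : f p + ψ p ≤ f x + ψ x := by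
  have hmin := isMinOn_univ_iff.mp hp x
  simp only [sub_self, inner_zero_right, ne_eq, OfNat.ofNat_ne_zero,
    not_false_eq_true, zero_pow, mul_zero, Finset.sum_const_zero, zero_add] at hmin
  linarith [hsmooth p x]

theorem inner_add_sum_add_sub_nonneg (hψ : ConvexOn ℝ univ ψ)
    (hp : IsProxGradStep L g ψ x p) (y : EuclideanSpace ℝ ι) :
    0 ≤ ⟪g, y - p⟫ + ∑ i, L i * ((p i - x i) * (y i - p i)) + ψ y - ψ p := by
  refine nonneg_of_forall_nonneg_mul_add_sq
    (b := (1 / 2) * ∑ i, L i * (y i - p i) ^ 2) fun t ht0 ht1 => ?_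
  have hmin := isMinOn_univ_iff.mp hp (p + t • (y - p))
  have hψt : ψ (p + t • (y - p)) ≤ (1 - t) * ψ p + t * ψ y := by
    have h := hψ.2 (mem_univ p) (mem_univ y) (sub_nonneg.2 ht1) ht0.le (by ring)
    rwa [show (1 - t) • p + t • y = p + t • (y - p) by module] at h
  have e1 : ⟪g, p + t • (y - p) - x⟫ = ⟪g, p - x⟫ + t * ⟪g, y - p⟫ := by
    rw [add_sub_right_comm, inner_add_right, real_inner_smul_right]
  have e2 : ∑ i, L i * ((p + t • (y - p)) i - x i) ^ 2 = ∑ i, L i * (p i - x i) ^ 2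
      + 2 * t * ∑ i, L i * ((p i - x i) * (y i - p i)) + t ^ 2 * ∑ i, L i * (y i - p i) ^ 2 := by
    simp only [Finset.mul_sum, ← Finset.sum_add_distrib]
    refine Finset.sum_congr rfl fun i _ => ?_
    simp only [PiLp.add_apply, PiLp.smul_apply, PiLp.sub_apply, smul_eq_mul]
    ring
  simp only [e1, e2] at hmin
  nlinarith

theorem sub_le_two_mul_sqrt_mul_sqrt (hL : ∀ i, 0 < L i)
    (hf' : ∀ x, HasGradientAt f (f' x) x) (hf : ConvexOn ℝ univ f)
    (hsmooth : ∀ x y, f x ≤ f y + ⟪f' y, x - y⟫ + (1 / 2) * ∑ i, L i * (x i - y i) ^ 2)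
    (hψ : ConvexOn ℝ univ ψ) (hp : IsProxGradStep L (f' x) ψ x p) (y : EuclideanSpace ℝ ι) :
    f p + ψ p - (f y + ψ y) ≤
      2 * √(∑ i, L i * (x i - p i) ^ 2) * √(∑ i, L i * (p i - y i) ^ 2) := by
  set s := √(∑ i, L i * (x i - p i) ^ 2)
  set q := √(∑ i, L i * (p i - y i) ^ 2)
  have hopt := hp.inner_add_sum_add_sub_nonneg hψ y
  have hconv := hf.add_inner_le_of_hasGradientAt (hf' p) y
  have hlip : √(∑ i, (f' p i - f' x i) ^ 2 / L i) ≤ s := by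
    have hsymm : ∑ i, L i * (p i - x i) ^ 2 = ∑ i, L i * (x i - p i) ^ 2 :=
      Finset.sum_congr rfl fun i _ => by ring
    simpa only [hsymm] using sqrt_sum_sq_div_le_sqrt_sum_sq hL hf' hf hsmooth x p
  have hgrad : ⟪f' p - f' x, p - y⟫ ≤ s * q := by
    rw [EuclideanSpace.real_inner_eq_sum_mul]
    refine (sum_mul_le_sqrt_sum_sq_div_mul_sqrt hL _ _).trans ?_
    exact mul_le_mul_of_nonneg_right hlip (Real.sqrt_nonneg _)
  have hstep : ∑ i, L i * ((x i - p i) * (p i - y i)) ≤ s * q :=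
    sum_weight_mul_le_sqrt_mul_sqrt (fun i => (hL i).le) _ _
  have e1 : ⟪f' p - f' x, p - y⟫ = ⟪f' x, y - p⟫ - ⟪f' p, y - p⟫ := by
    rw [← neg_sub y p, inner_neg_right, inner_sub_left]
    ring
  have e2 : ∑ i, L i * ((p i - x i) * (y i - p i)) = ∑ i, L i * ((x i - p i) * (p i - y i)) :=
    Finset.sum_congr rfl fun i _ => by ring
  linarith

end IsProxGradStep

end Weighted

theorem distL_nonneg {n : ℕ} (L : Fin n → ℝ) (x : EuclideanSpace ℝ (Fin n))
    (S : Set (EuclideanSpace ℝ (Fin n))) : 0 ≤ distL L x S :=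
  Real.iInf_nonneg fun _ => Real.sqrt_nonneg _

theorem le_mul_distL {n : ℕ} {L : Fin n → ℝ} {x : EuclideanSpace ℝ (Fin n)}
    {S : Set (EuclideanSpace ℝ (Fin n))} (hS : S.Nonempty) {a c : ℝ} (hc : 0 ≤ c)
    (h : ∀ y ∈ S, a ≤ c * √(∑ i, L i * (x i - y i) ^ 2)) : a ≤ c * distL L x S := by
  have : Nonempty S := hS.to_subtype
  rw [distL, Real.mul_iInf_of_nonneg hc]
  exact le_ciInf fun y => h y y.2

theorem le_div_mul_of_half_mul_sq_le {μ d s : ℝ} (hμ : 0 < μ) (hd : 0 ≤ d) (hs : 0 ≤ s)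
    (h : μ / 2 * d ^ 2 ≤ 2 * s * d) : d ≤ 4 / μ * s := by
  rcases hd.eq_or_lt with rfl | hd
  · positivity
  · rw [div_mul_eq_mul_div, le_div_iff₀ hμ]
    nlinarith

theorem stmt_9_general {n : ℕ} (L : Fin n → ℝ) (hL : ∀ i, 0 < L i)
    (f : EuclideanSpace ℝ (Fin n) → ℝ) (f' : EuclideanSpace ℝ (Fin n) → EuclideanSpace ℝ (Fin n))
    (hf' : ∀ x, HasGradientAt f (f' x) x)
    (hfconv : ConvexOn ℝ Set.univ f)
    (hsmooth : ∀ x y, f x ≤ f y + ⟪f' y, x - y⟫ + (1 / 2) * ∑ i, L i * (x i - y i) ^ 2)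
    (ψ : EuclideanSpace ℝ (Fin n) → ℝ) (hψ : ConvexOn ℝ Set.univ ψ)
    (F : EuclideanSpace ℝ (Fin n) → ℝ) (hF : ∀ x, F x = f x + ψ x)
    (Fstar : ℝ) (Xstar : Set (EuclideanSpace ℝ (Fin n)))
    (hne : Xstar.Nonempty) (hXstar : Xstar = {x | F x = Fstar})
    (x₀ : EuclideanSpace ℝ (Fin n)) (μ : ℝ) (hμ : 0 < μ)
    (hgrowth : ∀ x, F x ≤ F x₀ → Fstar + μ / 2 * (distL L x Xstar) ^ 2 ≤ F x)
    (T : EuclideanSpace ℝ (Fin n) → EuclideanSpace ℝ (Fin n))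
    (hT : ∀ x y, ⟪f' x, T x - x⟫ + (1 / 2) * (∑ i, L i * (T x i - x i) ^ 2) + ψ (T x)
        ≤ ⟪f' x, y - x⟫ + (1 / 2) * (∑ i, L i * (y i - x i) ^ 2) + ψ y) :
    ∀ x, F x ≤ F x₀ →
      distL L (T x) Xstar ≤ (4 / μ) * Real.sqrt (∑ i, L i * (x i - T x i) ^ 2) := by
  intro x hx
  have hp : IsProxGradStep L (f' x) ψ x (T x) := isMinOn_univ_iff.mpr (hT x)
  have hdesc : F (T x) ≤ F x₀ := by linarith [hF (T x), hF x, hp.add_le hsmooth]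
  have hgap : F (T x) - Fstar ≤
      2 * √(∑ i, L i * (x i - T x i) ^ 2) * distL L (T x) Xstar := by
    refine le_mul_distL hne (by positivity) fun y hy => ?_
    have hFy : F y = Fstar := by rw [hXstar] at hy; exact hy
    rw [← hFy, hF, hF]
    exact hp.sub_le_two_mul_sqrt_mul_sqrt hL hf' hfconv hsmooth hψ y
  refine le_div_mul_of_half_mul_sq_le hμ (distL_nonneg L _ _) (Real.sqrt_nonneg _) ?_
  linarith [hgrowth (T x) hdesc]

theorem stmt_9 {n : ℕ} (L : Fin n → ℝ) (hL : ∀ i, 0 < L i)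
    (f : EuclideanSpace ℝ (Fin n) → ℝ) (f' : EuclideanSpace ℝ (Fin n) → EuclideanSpace ℝ (Fin n))
    (hf' : ∀ x, HasGradientAt f (f' x) x)
    (hfconv : ConvexOn ℝ Set.univ f)
    (hsmooth : ∀ x y, f x ≤ f y + ⟪f' y, x - y⟫ + (1 / 2) * ∑ i, L i * (x i - y i) ^ 2)
    (ψ : EuclideanSpace ℝ (Fin n) → ℝ) (hψ : ConvexOn ℝ Set.univ ψ)
    (F : EuclideanSpace ℝ (Fin n) → ℝ) (hF : ∀ x, F x = f x + ψ x)
    (Fstar : ℝ) (Xstar : Set (EuclideanSpace ℝ (Fin n)))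
    (hne : Xstar.Nonempty) (hXstar : Xstar = {x | F x = Fstar}) (hmin : ∀ x, Fstar ≤ F x)
    (x₀ : EuclideanSpace ℝ (Fin n)) (μ : ℝ) (hμ : 0 < μ)
    (hgrowth : ∀ x, F x ≤ F x₀ → Fstar + μ / 2 * (distL L x Xstar) ^ 2 ≤ F x)
    (T : EuclideanSpace ℝ (Fin n) → EuclideanSpace ℝ (Fin n))
    (hT : ∀ x y, ⟪f' x, T x - x⟫ + (1 / 2) * (∑ i, L i * (T x i - x i) ^ 2) + ψ (T x)
        ≤ ⟪f' x, y - x⟫ + (1 / 2) * (∑ i, L i * (y i - x i) ^ 2) + ψ y) :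
    ∀ x, F x ≤ F x₀ →
      distL L (T x) Xstar ≤ (4 / μ) * Real.sqrt (∑ i, L i * (x i - T x i) ^ 2) :=
  stmt_9_general L hL f f' hf' hfconv hsmooth ψ hψ F hF Fstar Xstar hne hXstar x₀ μ hμ hgrowth T hT
end

section
/- For μ₀ > μ_F > 0, set l̄ = ⌈log₂(μ₀/μ_F)⌉ and μ_s = μ₀/2^s, K_s = ⌈2√(e/μ_s) − 1⌉. Then Σ_{s=0}^{l̄−1} K_s ≤ (2√e/(√2 − 1))(√(2/μ_F) − √(1/μ₀)). -/
/-! Since `⌈y - 1⌉₊ ≤ y`, each `K_s` is at most `2√(e/μ₀) · √2 ^ s`, so the sum is dominated by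
a geometric series of ratio `√2`; its top term `√2 ^ l̄` is controlled by `2 ^ l̄ ≤ 2 μ₀ / μ_F`. -/

open Real

theorem Nat.ceil_sub_one_le {R : Type*} [Field R] [LinearOrder R] [IsStrictOrderedRing R]
    [FloorSemiring R] {a : R} (ha : 0 ≤ a) : (⌈a - 1⌉₊ : R) ≤ a := by
  rcases le_or_gt (a - 1) 0 with h | h
  · simpa [Nat.ceil_eq_zero.mpr h] using ha
  · linarith [Nat.ceil_lt_add_one h.le]

theorem Real.sqrt_pow {c : ℝ} (hc : 0 ≤ c) (n : ℕ) : √(c ^ n) = √c ^ n := by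
  rw [← sqrt_sq (by positivity : 0 ≤ √c ^ n), ← pow_mul, mul_comm, pow_mul, sq_sqrt hc]

theorem Real.sqrt_div_div_pow (a b : ℝ) {c : ℝ} (hc : 0 ≤ c) (n : ℕ) :
    √(a / (b / c ^ n)) = √(a / b) * √c ^ n := by
  rw [div_div_eq_mul_div, mul_div_right_comm, sqrt_mul' _ (by positivity),
    sqrt_pow hc]

theorem Real.pow_natCeil_logb_le {b x : ℝ} (hb : 1 < b) (hx : 1 ≤ x) :
    b ^ ⌈logb b x⌉₊ ≤ b * x := by
  have hlog : 0 ≤ logb b x := logb_nonneg hb hx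
  calc b ^ ⌈logb b x⌉₊ = b ^ (⌈logb b x⌉₊ : ℝ) := (rpow_natCast b _).symm
    _ ≤ b ^ (logb b x + 1) := rpow_le_rpow_of_exponent_le hb.le (Nat.ceil_lt_add_one hlog).le
    _ = b * x := by
      rw [rpow_add_one (by positivity), rpow_logb (by positivity) hb.ne' (by positivity), mul_comm]

theorem stmt_12 (μ₀ μF : ℝ) (hμF : 0 < μF) (hμ : μF < μ₀)
    (lbar : ℕ) (hlbar : lbar = ⌈Real.logb 2 (μ₀ / μF)⌉₊)
    (μs : ℕ → ℝ) (hμs : ∀ s, μs s = μ₀ / 2 ^ s)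
    (K : ℕ → ℕ) (hK : ∀ s, K s = ⌈2 * Real.sqrt (Real.exp 1 / μs s) - 1⌉₊) :
    ∑ s ∈ Finset.range lbar, (K s : ℝ)
      ≤ (2 * Real.sqrt (Real.exp 1) / (Real.sqrt 2 - 1)) *
        (Real.sqrt (2 / μF) - Real.sqrt (1 / μ₀)) := by
  have hμ₀ : 0 < μ₀ := hμF.trans hμ
  have hsqrt2 : 1 < √2 := by simpa using sqrt_lt_sqrt zero_le_one one_lt_two
  set c := 2 * √(exp 1) * √(1 / μ₀)
  have hK_le : ∀ s, (K s : ℝ) ≤ c * √2 ^ s := fun s => by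
    have : 2 * √(exp 1 / μs s) = c * √2 ^ s := by
      rw [hμs, sqrt_div_div_pow _ _ zero_le_two, div_eq_mul_one_div (exp 1),
        sqrt_mul (exp_pos 1).le]
      ring
    rw [hK, ← this]
    exact Nat.ceil_sub_one_le (by positivity)
  have h2lbar : √(1 / μ₀) * √2 ^ lbar ≤ √(2 / μF) := by
    have : (2 : ℝ) ^ lbar ≤ 2 * (μ₀ / μF) :=
      hlbar ▸ pow_natCeil_logb_le one_lt_two ((one_le_div hμF).mpr hμ.le)
    calc √(1 / μ₀) * √2 ^ lbar = √(1 / μ₀ * 2 ^ lbar) := by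
          rw [sqrt_mul (by positivity), sqrt_pow zero_le_two]
      _ ≤ √(1 / μ₀ * (2 * (μ₀ / μF))) := by gcongr
      _ = √(2 / μF) := by congr 1; field_simp
  calc ∑ s ∈ Finset.range lbar, (K s : ℝ)
      ≤ ∑ s ∈ Finset.range lbar, c * √2 ^ s := Finset.sum_le_sum fun s _ => hK_le s
    _ = 2 * √(exp 1) / (√2 - 1) * (√(1 / μ₀) * √2 ^ lbar - √(1 / μ₀)) := by
      rw [← Finset.mul_sum, geom_sum_eq hsqrt2.ne']
      ring
    _ ≤ 2 * √(exp 1) / (√2 - 1) * (√(2 / μF) - √(1 / μ₀)) := by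
      have : 0 < √2 - 1 := by linarith
      gcongr
end

section
/- Let Δ_{k} = dist(x_k, X⋆)² be nonnegative reals, and let θ_k ∈ (0,1] satisfy (1−θ_{k+1})/θ_{k+1}² = 1/θ_k² and θ_0 = 1, and μ > 0. If Δ_1 ≤ Δ_0/(1 + μ/θ_0) and Δ_{k+1} ≤ (θ_k Δ_0 + (1−θ_k)Δ_k)/(1 + μ/θ_k) for all k ≥ 1, then Δ_k ≤ Δ_0/(1 + μ/(2θ_{k−1}²)) for all k ≥ 1. -/
/-!
Write `B(c) = Δ₀ / (1 + μ c / 2)`, so the claim is `Δ (n + 1) ≤ B(1 / θₙ²)`. The recursion for `θ`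
says `1 / θₙ² = (1 - θₙ₊₁) / θₙ₊₁²`, so the inductive hypothesis is a bound on `Δ (n + 1)` in terms
of `t = θₙ₊₁` alone, and the induction step becomes an inequality in `t`, `μ`, `Δ₀`: clearing
denominators, the gap between the two sides is a positive multiple of `μ (2 t³ + μ (1 - t)) ≥ 0`.
-/

theorem convex_comb_div_one_add_le {D t μ : ℝ} (hD : 0 ≤ D) (hμ : 0 ≤ μ) (ht0 : 0 < t)
    (ht1 : t ≤ 1) :
    (t * D + (1 - t) * (D / (1 + μ * (1 - t) / (2 * t ^ 2)))) / (1 + μ / t)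
      ≤ D / (1 + μ / (2 * t ^ 2)) := by
  have hA : 0 < 2 * t ^ 2 + μ * (1 - t) := by nlinarith
  have gap : D / (1 + μ / (2 * t ^ 2))
      - (t * D + (1 - t) * (D / (1 + μ * (1 - t) / (2 * t ^ 2)))) / (1 + μ / t)
      = D * μ * t ^ 2 * (2 * t ^ 3 + μ * (1 - t))
        / ((2 * t ^ 2 + μ) * (t + μ) * (2 * t ^ 2 + μ * (1 - t))) := by
    field_simp
    ring
  have hcore : 0 ≤ 2 * t ^ 3 + μ * (1 - t) := by nlinarith [pow_pos ht0 3]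
  rw [← sub_nonneg, gap]
  positivity

theorem convex_comb_div_one_add_le_of_le {D x s t μ : ℝ} (hD : 0 ≤ D) (hμ : 0 ≤ μ)
    (ht0 : 0 < t) (ht1 : t ≤ 1) (hst : (1 - t) / t ^ 2 = 1 / s ^ 2)
    (hx : x ≤ D / (1 + μ / (2 * s ^ 2))) :
    (t * D + (1 - t) * x) / (1 + μ / t) ≤ D / (1 + μ / (2 * t ^ 2)) := by
  have hs : μ / (2 * s ^ 2) = μ * (1 - t) / (2 * t ^ 2) := by
    calc μ / (2 * s ^ 2) = μ / 2 * (1 / s ^ 2) := by ring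
      _ = μ * (1 - t) / (2 * t ^ 2) := by rw [← hst]; ring
  rw [hs] at hx
  have h1t : 0 ≤ 1 - t := by linarith
  calc (t * D + (1 - t) * x) / (1 + μ / t)
      ≤ (t * D + (1 - t) * (D / (1 + μ * (1 - t) / (2 * t ^ 2)))) / (1 + μ / t) := by
        gcongr
    _ ≤ D / (1 + μ / (2 * t ^ 2)) := convex_comb_div_one_add_le hD hμ ht0 ht1

theorem stmt_14 (Δ : ℕ → ℝ) (hnn : ∀ k, 0 ≤ Δ k)
    (θ : ℕ → ℝ) (hθ0 : θ 0 = 1) (hθpos : ∀ k, 0 < θ k) (hθle : ∀ k, θ k ≤ 1)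
    (hθrec : ∀ k, (1 - θ (k + 1)) / (θ (k + 1)) ^ 2 = 1 / (θ k) ^ 2)
    (μ : ℝ) (hμ : 0 < μ)
    (h1 : Δ 1 ≤ Δ 0 / (1 + μ / θ 0))
    (hrec : ∀ k ≥ 1, Δ (k + 1) ≤ (θ k * Δ 0 + (1 - θ k) * Δ k) / (1 + μ / θ k)) :
    ∀ k ≥ 1, Δ k ≤ Δ 0 / (1 + μ / (2 * (θ (k - 1)) ^ 2)) := by
  intro k hk
  obtain ⟨n, rfl⟩ := Nat.exists_eq_add_of_le' hk
  rw [Nat.add_sub_cancel]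
  induction n with
  | zero =>
    rw [hθ0] at h1 ⊢
    calc Δ 1 ≤ Δ 0 / (1 + μ / 1) := h1
      _ ≤ Δ 0 / (1 + μ / (2 * 1 ^ 2)) := by gcongr <;> norm_num [hnn 0]
  | succ n ih =>
    exact (hrec (n + 1) (by omega)).trans <| convex_comb_div_one_add_le_of_le (hnn 0) hμ.le
      (hθpos _) (hθle _) (hθrec n) (ih (by omega))
end

section
/- Let f: ℝⁿ → ℝ be convex differentiable with f(x) ≤ f(y) + ⟨∇f(y), x−y⟩ + (1/2)‖x−y‖² for all x,y, let ψ be proper closed convex, F = f + ψ, and let the FISTA iterates satisfy x_{k+1} = argmin_x {⟨∇f(y_k), x−y_k⟩ + (1/2)‖x−y_k‖² + ψ(x)} with y_k = x_k + β_k(x_k − x_{k−1}) and β_k ∈ [0,1]. Then F(x_{k+1}) ≤ F(x_k) + (1/2)‖x_k − x_{k−1}‖² − (1/2)‖x_{k+1} − x_k‖², and consequently F(x_k) ≤ F(x_0) for all k (the non-blowout property). -/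
open scoped RealInnerProductSpace

variable {n : ℕ}

-- gradient inequality for convex functions
lemma grad_ineq {f : EuclideanSpace ℝ (Fin n) → ℝ} {g w : EuclideanSpace ℝ (Fin n)}
    (hfconv : ConvexOn ℝ Set.univ f) (hg : HasGradientAt f g w)
    (q : EuclideanSpace ℝ (Fin n)) : f w + ⟪g, q - w⟫ ≤ f q := by
  set φ : ℝ → ℝ := f ∘ (AffineMap.lineMap w q) with hφ
  have hconvφ : ConvexOn ℝ Set.univ φ := by
    have := hfconv.comp_affineMap (AffineMap.lineMap w q)
    simpa using this
  have hc : HasDerivAt (fun t : ℝ => AffineMap.lineMap w q t) (q - w) 0 := by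
    simp only [AffineMap.lineMap_apply_module]
    have h2 : (fun t : ℝ => (1 - t) • w + t • q) = fun t : ℝ => t • (q - w) + w := by
      funext t; module
    rw [h2]
    have : HasDerivAt (fun t : ℝ => t • (q - w) + w) ((1:ℝ) • (q - w)) 0 :=
      ((hasDerivAt_id (0:ℝ)).smul_const (q - w)).add_const w
    simpa using this
  have hd : HasDerivAt φ ⟪g, q - w⟫ 0 := by
    have hF := hg.hasFDerivAt
    have h0 : (AffineMap.lineMap w q : ℝ → EuclideanSpace ℝ (Fin n)) 0 = w := by simp
    have := (h0 ▸ hF).comp_hasDerivAt 0 hc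
    simpa [InnerProductSpace.toDual_apply_apply] using this
  have := hconvφ.le_slope_of_hasDerivAt (Set.mem_univ (0:ℝ)) (Set.mem_univ (1:ℝ))
    one_pos hd
  rw [slope_def_field] at this
  simp only [hφ, Function.comp_apply, AffineMap.lineMap_apply_one, AffineMap.lineMap_apply_zero] at this
  have h1 : (f q - f w) / (1 - 0 : ℝ) = f q - f w := by norm_num
  linarith [h1 ▸ this]

-- subgradient property from the argmin inequality
lemma subgrad_ineq {ψ : EuclideanSpace ℝ (Fin n) → ℝ} (hψ : ConvexOn ℝ Set.univ ψ)
    {g w p : EuclideanSpace ℝ (Fin n)}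
    (h : ∀ z, ⟪g, p - w⟫ + (1 / 2) * ‖p - w‖ ^ 2 + ψ p
        ≤ ⟪g, z - w⟫ + (1 / 2) * ‖z - w‖ ^ 2 + ψ z)
    (z : EuclideanSpace ℝ (Fin n)) :
    ψ p ≤ ψ z + ⟪g + (p - w), z - p⟫ := by
  rw [← sub_nonpos]
  have key : ∀ ε > (0:ℝ), ψ p - (ψ z + ⟪g + (p - w), z - p⟫) ≤ 0 + ε := by
    intro ε hε
    set C : ℝ := (1 / 2) * ‖z - p‖ ^ 2 with hC
    have hC0 : 0 ≤ C := by positivity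
    set t : ℝ := min 1 (ε / (C + 1)) with ht
    have ht0 : 0 < t := lt_min one_pos (by positivity)
    have ht1 : t ≤ 1 := min_le_left _ _
    have htε : t * C ≤ ε := by
      have h1 : t ≤ ε / (C + 1) := min_le_right _ _
      have h3 : (ε / (C + 1)) * C ≤ ε := by
        rw [div_mul_eq_mul_div, div_le_iff₀ (by positivity)]
        nlinarith
      nlinarith
    have hzt := h (p + t • (z - p))
    have hψt : ψ (p + t • (z - p)) ≤ (1 - t) * ψ p + t * ψ z := by
      have hpt : p + t • (z - p) = (1 - t) • p + t • z := by module
      rw [hpt]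
      have := hψ.2 (Set.mem_univ p) (Set.mem_univ z) (by linarith : (0:ℝ) ≤ 1 - t)
        ht0.le (by ring)
      simpa [smul_eq_mul] using this
    have hinner : ⟪g, (p + t • (z - p)) - w⟫ = ⟪g, p - w⟫ + t * ⟪g, z - p⟫ := by
      have h4 : (p + t • (z - p)) - w = (p - w) + t • (z - p) := by module
      rw [h4, inner_add_right, real_inner_smul_right]
    have hnorm : ‖(p + t • (z - p)) - w‖ ^ 2
        = ‖p - w‖ ^ 2 + 2 * (t * ⟪p - w, z - p⟫) + t ^ 2 * ‖z - p‖ ^ 2 := by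
      have h4 : (p + t • (z - p)) - w = (p - w) + t • (z - p) := by module
      rw [h4, norm_add_sq_real, real_inner_smul_right, norm_smul, mul_pow,
        Real.norm_eq_abs, sq_abs]
    have hsplit : ⟪g + (p - w), z - p⟫ = ⟪g, z - p⟫ + ⟪p - w, z - p⟫ :=
      inner_add_left _ _ _
    rw [hinner, hnorm] at hzt
    rw [hsplit]
    set a := ⟪g, z - p⟫
    set b := ⟪p - w, z - p⟫
    set A := ⟪g, p - w⟫
    set N := ‖p - w‖ ^ 2
    set M := ‖z - p‖ ^ 2
    set P := ψ p
    set Q := ψ z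
    set R := ψ (p + t • (z - p))
    have hCM : C = (1 / 2) * M := hC
    have hmul : t * (P - Q - a - b - t * C) ≤ 0 := by nlinarith [hzt, hψt]
    have h6 : P - Q - a - b - t * C ≤ 0 := by nlinarith [hmul, ht0]
    linarith
  exact le_of_forall_pos_le_add key



theorem stmt_15 {n : ℕ}
    (f : EuclideanSpace ℝ (Fin n) → ℝ) (f' : EuclideanSpace ℝ (Fin n) → EuclideanSpace ℝ (Fin n))
    (hf' : ∀ x, HasGradientAt f (f' x) x)
    (hfconv : ConvexOn ℝ Set.univ f)
    (hsmooth : ∀ x y, f x ≤ f y + ⟪f' y, x - y⟫ + (1 / 2) * ‖x - y‖ ^ 2)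
    (ψ : EuclideanSpace ℝ (Fin n) → ℝ) (hψ : ConvexOn ℝ Set.univ ψ)
    (F : EuclideanSpace ℝ (Fin n) → ℝ) (hF : ∀ x, F x = f x + ψ x)
    (x y : ℕ → EuclideanSpace ℝ (Fin n)) (β : ℕ → ℝ)
    (hβ0 : ∀ k, 0 ≤ β k) (hβ1 : ∀ k, β k ≤ 1)
    (hy : ∀ k, y k = x k + β k • (x k - x (k - 1)))
    (hargmin : ∀ k z, ⟪f' (y k), x (k + 1) - y k⟫ + (1 / 2) * ‖x (k + 1) - y k‖ ^ 2
          + ψ (x (k + 1))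
        ≤ ⟪f' (y k), z - y k⟫ + (1 / 2) * ‖z - y k‖ ^ 2 + ψ z) :
    (∀ k, F (x (k + 1))
        ≤ F (x k) + (1 / 2) * ‖x k - x (k - 1)‖ ^ 2 - (1 / 2) * ‖x (k + 1) - x k‖ ^ 2) ∧
      (∀ k, F (x k) ≤ F (x 0)) := by
  have step : ∀ k, F (x (k + 1))
      ≤ F (x k) + (1 / 2) * ‖x k - x (k - 1)‖ ^ 2 - (1 / 2) * ‖x (k + 1) - x k‖ ^ 2 := by
    intro k
    have h1 := hsmooth (x (k + 1)) (y k)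
    have h2 := grad_ineq hfconv (hf' (y k)) (x k)
    have h3 := subgrad_ineq hψ (hargmin k) (x k)
    set w := y k with hwdef
    set g := f' w
    set p := x (k + 1)
    set q := x k
    set r := x (k - 1)
    have hsplit : ⟪g + (p - w), q - p⟫ = ⟪g, q - p⟫ + ⟪p - w, q - p⟫ :=
      inner_add_left _ _ _
    have hdec : ⟪g, q - w⟫ = ⟪g, p - w⟫ + ⟪g, q - p⟫ := by
      rw [← inner_add_right]; congr 1; module
    have hnorm : ‖q - w‖ ^ 2 = ‖p - w‖ ^ 2 + 2 * ⟪p - w, q - p⟫ + ‖q - p‖ ^ 2 := by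
      have h4 : q - w = (p - w) + (q - p) := by module
      rw [h4, norm_add_sq_real]
    have hqw : ‖q - w‖ ^ 2 ≤ ‖q - r‖ ^ 2 := by
      have hw : w = q + β k • (q - r) := hy k
      have h5 : q - w = (-β k) • (q - r) := by rw [hw]; module
      rw [h5, norm_smul, mul_pow, Real.norm_eq_abs, abs_neg, abs_of_nonneg (hβ0 k)]
      have hb2 : β k ^ 2 ≤ 1 := by nlinarith [hβ0 k, hβ1 k]
      nlinarith [sq_nonneg ‖q - r‖, mul_le_mul_of_nonneg_right hb2 (sq_nonneg ‖q - r‖)]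
    have h8 : ‖p - q‖ ^ 2 = ‖q - p‖ ^ 2 := by rw [norm_sub_rev]
    rw [hF, hF]
    linarith [h1, h2, h3]
  refine ⟨step, ?_⟩
  have mono : ∀ k, F (x k) + (1 / 2) * ‖x k - x (k - 1)‖ ^ 2 ≤ F (x 0) := by
    intro k
    induction k with
    | zero => simp
    | succ k ih =>
      have := step k
      have h7 : (k + 1 : ℕ) - 1 = k := rfl
      rw [h7]
      linarith
  intro k
  have := mono k
  nlinarith [sq_nonneg ‖x k - x (k - 1)‖]
end
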